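/- arXiv:2208.08001 — 12 statements merged into one kernel-verified Lean document; each statement's English description precedes it below -/
import Mathlib

section
/- For any n ∈ {1,…,N}, the subgroup {(I - A)k : k ∈ ℤ^N, ∑ᵢ kᵢ = 0} of ℤ^N equals the image (I - Â_n)ℤ^N, where Â_n = A + R_n - A·R_n. -/
/-- For any n, the subgroup {(I-A)k : k ∈ ℤ^N, ∑ kᵢ = 0} equals (I - Â_n)ℤ^N,
where Â_n = A + R_n - A·R_n and R_n has n-th row all ones, other entries 0. -/
theorem stmt0 (N : ℕ) (hN : 1 < N) (A : Matrix (Fin N) (Fin N) ℤ) (n : Fin N) :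
    let R : Matrix (Fin N) (Fin N) ℤ := Matrix.of fun i _ => if i = n then 1 else 0
    {v : Fin N → ℤ | ∃ k : Fin N → ℤ, (∑ i, k i) = 0 ∧ (1 - A).mulVec k = v}
      = Set.range ((1 - (A + R - A * R)).mulVec) := by
  intro R
  have hfac : (1 - (A + R - A * R)) = (1 - A) * (1 - R) := by noncomm_ring
  have hRmul : ∀ m : Fin N → ℤ, ∀ i, R.mulVec m i = if i = n then ∑ j, m j else 0 := by
    intro m i
    simp only [Matrix.mulVec, dotProduct, R, Matrix.of_apply]
    by_cases h : i = n <;> simp [h]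
  ext v
  simp only [Set.mem_setOf_eq, Set.mem_range, hfac]
  constructor
  · rintro ⟨k, hk, rfl⟩
    refine ⟨k, ?_⟩
    have hfix : (1 - R).mulVec k = k := by
      funext i
      simp [Matrix.sub_mulVec, Matrix.one_mulVec, hRmul, hk]
    rw [← Matrix.mulVec_mulVec, hfix]
  · rintro ⟨m, rfl⟩
    refine ⟨(1 - R).mulVec m, ?_, by rw [Matrix.mulVec_mulVec]⟩
    simp only [Matrix.sub_mulVec, Matrix.one_mulVec, Pi.sub_apply, hRmul]
    rw [Finset.sum_sub_distrib]
    simp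
end

section
/- The kernel of ι̂_A : ℤ → ℤ^N/(I-Â)ℤ^N equals the image of the map s_A : Ker(I-A) → ℤ sending l = (l₁,…,l_N) to ∑ᵢ lᵢ; i.e., the sequence Ker(I-A) →^{s_A} ℤ →^{ι̂_A} ℤ^N/(I-Â)ℤ^N is exact at ℤ. -/
/-!
Since `1 - Â = (1 - A) * (1 - R₁)` and `R₁ v = (∑ᵢ vᵢ) e₁`, the range of `1 - R₁` is the
hyperplane of vectors with coordinate sum `0`. Hence `(1 - A) (m e₁)` lies in the range of
`1 - Â` iff it equals `(1 - A) y` for some `y` with `∑ yᵢ = 0`, i.e. iff `l = m e₁ - y` is a vector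
of `Ker (1 - A)` with `∑ lᵢ = m`.
-/

open Matrix

theorem Submodule.apply_mem_map_ker_iff {R M P Q : Type*} [Ring R] [AddCommGroup M]
    [AddCommGroup P] [AddCommGroup Q] [Module R M] [Module R P] [Module R Q]
    (f : M →ₗ[R] P) (s : M →ₗ[R] Q) (x : M) :
    f x ∈ (LinearMap.ker s).map f ↔ ∃ l ∈ LinearMap.ker f, s l = s x := by
  constructor
  · rintro ⟨y, hy, hfy⟩
    refine ⟨x - y, ?_, ?_⟩
    · simp [LinearMap.mem_ker, hfy]
    · simp_all [LinearMap.mem_ker]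
  · rintro ⟨l, hl, hsl⟩
    refine ⟨x - l, ?_, ?_⟩
    · simp [LinearMap.mem_ker, hsl]
    · simp_all [LinearMap.mem_ker]

section RowOfOnes

variable {ι K : Type*} [Fintype ι] [CommRing K]

def sumLinearMap : (ι → K) →ₗ[K] K := ∑ i, LinearMap.proj i

@[simp]
theorem sumLinearMap_apply (v : ι → K) : sumLinearMap v = ∑ i, v i := by
  simp [sumLinearMap]

variable [DecidableEq ι]

def rowOfOnes (i₀ : ι) : Matrix ι ι K := Matrix.of fun i _ => if i = i₀ then 1 else 0

theorem rowOfOnes_mulVec (i₀ : ι) (v : ι → K) :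
    rowOfOnes i₀ *ᵥ v = Pi.single i₀ (∑ i, v i) := by
  ext i
  by_cases h : i = i₀ <;> simp [rowOfOnes, mulVec, dotProduct, h]

theorem range_one_sub_rowOfOnes (i₀ : ι) :
    LinearMap.range (1 - rowOfOnes i₀ : Matrix ι ι K).mulVecLin = LinearMap.ker sumLinearMap := by
  ext v
  simp only [LinearMap.mem_range, mulVecLin_apply, LinearMap.mem_ker, sumLinearMap_apply,
    sub_mulVec, one_mulVec, rowOfOnes_mulVec]
  constructor
  · rintro ⟨w, rfl⟩
    simp
  · intro hv
    exact ⟨v, by simp [hv]⟩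

theorem setOf_mk_mulVec_single_eq_zero_eq_sum_image (A : Matrix ι ι K) (i₀ : ι) :
    {m : K | (Submodule.Quotient.mk ((1 - A) *ᵥ Pi.single i₀ m) :
        (ι → K) ⧸ LinearMap.range (1 - (A + rowOfOnes i₀ - A * rowOfOnes i₀)).mulVecLin) = 0}
      = (fun l : ι → K => ∑ i, l i) '' {l | (1 - A) *ᵥ l = 0} := by
  have hfactor : 1 - (A + rowOfOnes i₀ - A * rowOfOnes i₀) = (1 - A) * (1 - rowOfOnes i₀) := by
    noncomm_ring
  have hrange : LinearMap.range (1 - (A + rowOfOnes i₀ - A * rowOfOnes i₀)).mulVecLin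
      = (LinearMap.ker sumLinearMap).map (1 - A).mulVecLin := by
    rw [hfactor, mulVecLin_mul, LinearMap.range_comp, range_one_sub_rowOfOnes]
  ext m
  simp only [Set.mem_ofPred_eq, Set.mem_image, Submodule.Quotient.mk_eq_zero, hrange]
  simp only [← mulVecLin_apply, Submodule.apply_mem_map_ker_iff, LinearMap.mem_ker,
    sumLinearMap_apply, Finset.sum_pi_single', Finset.mem_univ, if_true]

end RowOfOnes

/-- Exactness at ℤ: Ker(ι̂_A) = s_A(Ker(I-A)), where s_A(l) = ∑ lᵢ. -/
theorem stmt7 (N : ℕ) (hN : 1 < N) (A : Matrix (Fin N) (Fin N) ℤ) :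
    let R : Matrix (Fin N) (Fin N) ℤ := Matrix.of fun i _ => if (i : ℕ) = 0 then 1 else 0
    let Ahat := A + R - A * R
    {m : ℤ |
      (Submodule.Quotient.mk ((1 - A).mulVec (fun i => if (i : ℕ) = 0 then m else 0)) :
        (Fin N → ℤ) ⧸ LinearMap.range (1 - Ahat).mulVecLin) = 0}
      = (fun l : Fin N → ℤ => ∑ i, l i) '' {l | (1 - A).mulVec l = 0} := by
  intro R Ahat
  let i₀ : Fin N := ⟨0, by omega⟩
  have hi₀ : ∀ i : Fin N, ((i : ℕ) = 0) = (i = i₀) := fun i => by simp [i₀, Fin.ext_iff]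
  have hR : R = rowOfOnes i₀ := by ext i j; simp [R, rowOfOnes, hi₀]
  have hAhat : Ahat = A + rowOfOnes i₀ - A * rowOfOnes i₀ := by simp only [Ahat, hR]
  have hsingle : ∀ m : ℤ, (fun i : Fin N => if (i : ℕ) = 0 then m else 0) = Pi.single i₀ m := by
    intro m; ext i; simp [Pi.single_apply, hi₀]
  rw [hAhat]
  simp only [hsingle]
  exact setOf_mk_mulVec_single_eq_zero_eq_sum_image A i₀
end

section
/- The map j_A : Ker(I-Â) → Ker(I-A) sending (l₁,l₂,…,l_N) to (-∑_{i=2}^N lᵢ, l₂,…,l_N) is a well-defined group homomorphism, and the sequence 0 → ℤ →^{i₁} Ker(I-Â) →^{j_A} Ker(I-A) is exact, where i₁(n) = (n,0,…,0). -/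
/-- j_A : Ker(I-Â) → Ker(I-A), (l₁,…,l_N) ↦ (-∑_{i≥2} lᵢ, l₂,…,l_N) is a
well-defined group homomorphism, and 0 → ℤ →^{i₁} Ker(I-Â) →^{j_A} Ker(I-A)
is exact, where i₁(n) = (n,0,…,0). -/
theorem stmt8 (N : ℕ) (hN : 1 < N) (A : Matrix (Fin N) (Fin N) ℤ) :
    let R : Matrix (Fin N) (Fin N) ℤ := Matrix.of fun i _ => if (i : ℕ) = 0 then 1 else 0
    let Ahat := A + R - A * R
    let i1 : ℤ → (Fin N → ℤ) := fun n i => if (i : ℕ) = 0 then n else 0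
    let jA : (Fin N → ℤ) → (Fin N → ℤ) :=
      fun l i => if (i : ℕ) = 0 then -∑ j ∈ Finset.univ.filter (fun j : Fin N => (j : ℕ) ≠ 0), l j
                 else l i
    -- j_A maps Ker(I-Â) into Ker(I-A)
    (∀ l : Fin N → ℤ, (1 - Ahat).mulVec l = 0 → (1 - A).mulVec (jA l) = 0) ∧
    -- j_A is additive
    (∀ l l' : Fin N → ℤ, jA (l + l') = jA l + jA l') ∧
    -- i₁ lands in Ker(I-Â)
    (∀ n : ℤ, (1 - Ahat).mulVec (i1 n) = 0) ∧
    -- exactness at ℤ: i₁ is injective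
    Function.Injective i1 ∧
    -- exactness at Ker(I-Â): ker j_A = im i₁
    (∀ l : Fin N → ℤ, (1 - Ahat).mulVec l = 0 → (jA l = 0 ↔ ∃ n : ℤ, l = i1 n)) := by
  intro R Ahat i1 jA
  have hNpos : 0 < N := by omega
  -- R.mulVec
  have hRmul : ∀ (l : Fin N → ℤ) (i : Fin N),
      R.mulVec l i = if (i : ℕ) = 0 then ∑ j, l j else 0 := by
    intro l i
    simp only [Matrix.mulVec, dotProduct, R, Matrix.of_apply]
    by_cases hi : (i : ℕ) = 0 <;> simp [hi]
  -- splitting the sum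
  have hsum : ∀ l : Fin N → ℤ,
      ∑ j, l j = l ⟨0, hNpos⟩ + ∑ j ∈ Finset.univ.filter (fun j : Fin N => (j : ℕ) ≠ 0), l j := by
    intro l
    rw [← Finset.sum_filter_add_sum_filter_not Finset.univ (fun j : Fin N => (j : ℕ) = 0)]
    congr 1
    have : Finset.univ.filter (fun j : Fin N => (j : ℕ) = 0) = {⟨0, hNpos⟩} := by
      ext j; simp [Fin.ext_iff]
    rw [this, Finset.sum_singleton]
  -- jA l = (1 - R).mulVec l
  have hjA : ∀ l : Fin N → ℤ, jA l = (1 - R).mulVec l := by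
    intro l
    funext i
    rw [Matrix.sub_mulVec, Matrix.one_mulVec]
    simp only [jA, Pi.sub_apply, hRmul]
    by_cases hi : (i : ℕ) = 0
    · have h0 : i = ⟨0, hNpos⟩ := by ext; exact hi
      simp only [hi, if_pos, hsum l, h0]
      ring
    · simp [hi]
  -- factorization 1 - Ahat = (1 - A) * (1 - R)
  have hfact : (1 - Ahat) = (1 - A) * (1 - R) := by
    simp only [Ahat]
    noncomm_ring
  have hfactV : ∀ l : Fin N → ℤ, (1 - Ahat).mulVec l = (1 - A).mulVec ((1 - R).mulVec l) := by
    intro l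
    rw [hfact, ← Matrix.mulVec_mulVec]
  refine ⟨?_, ?_, ?_, ?_, ?_⟩
  · intro l hl
    rw [hjA, ← hfactV, hl]
  · intro l l'
    rw [hjA, hjA, hjA, Matrix.mulVec_add]
  · intro n
    rw [hfactV]
    have : (1 - R).mulVec (i1 n) = 0 := by
      funext i
      rw [Matrix.sub_mulVec, Matrix.one_mulVec]
      simp only [Pi.sub_apply, hRmul, i1, Pi.zero_apply]
      by_cases hi : (i : ℕ) = 0
      · simp only [hi, if_pos]
        rw [hsum]
        have : ∀ j ∈ Finset.univ.filter (fun j : Fin N => (j : ℕ) ≠ 0),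
            (if (j : ℕ) = 0 then n else 0) = 0 := by
          intro j hj
          simp only [Finset.mem_filter] at hj
          simp [hj.2]
        rw [Finset.sum_eq_zero this]
        simp
      · simp [hi]
    rw [this, Matrix.mulVec_zero]
  · intro n m h
    have := congrFun h ⟨0, hNpos⟩
    simpa [i1] using this
  · intro l _
    constructor
    · intro h
      refine ⟨l ⟨0, hNpos⟩, ?_⟩
      funext i
      by_cases hi : (i : ℕ) = 0
      · have h0 : i = ⟨0, hNpos⟩ := by ext; exact hi
        simp [i1, hi, h0]
      · have := congrFun h i
        simp only [jA, hi, if_neg, Pi.zero_apply, if_false] at this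
        simp only [i1, hi, if_neg]
        simpa using this
    · rintro ⟨n, rfl⟩
      funext i
      by_cases hi : (i : ℕ) = 0
      · simp only [jA, hi, if_pos, Pi.zero_apply, neg_eq_zero]
        apply Finset.sum_eq_zero
        intro j hj
        simp only [Finset.mem_filter] at hj
        simp [i1, hj.2]
      · simp [jA, hi, i1]
end

section
/- If det(I - A) ≠ 0, then there is a short exact sequence 0 → ℤ →^{ι̂_A} ℤ^N/(I-Â)ℤ^N →^{q̂_A} ℤ^N/(I-A)ℤ^N → 0, where q̂_A is the natural quotient map induced by the inclusion (I-Â)ℤ^N ⊆ (I-A)ℤ^N. -/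
/-!
Since `1 - Â = (1 - A)(1 - R₁)` and `R₁ = e₀ 𝟙ᵀ` with `𝟙ᵀ e₀ = 1`, the map `1 - R₁` projects `ℤ^N`
onto the sum-zero vectors `ker 𝟙ᵀ`; so `(1 - Â)ℤ^N` is the image of `ker 𝟙ᵀ` under the injective map
`1 - A`. As `ℤ^N = ker 𝟙ᵀ ⊕ ℤ e₀`, the kernel `(1 - A)ℤ^N / (1 - Â)ℤ^N` of `q̂_A` is free of rank one,
generated by the class of `(1 - A) e₀ = ι̂_A 1`.
-/

open Function LinearMap Matrix

section ComplementOfLine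

variable {R M N : Type*} [Ring R] [AddCommGroup M] [Module R M] [AddCommGroup N] [Module R N]
  {φ : M →ₗ[R] R} {e : M}

theorem LinearMap.range_id_sub_smulRight (he : φ e = 1) :
    range (LinearMap.id - φ.smulRight e) = ker φ := by
  ext u
  constructor
  · rintro ⟨v, rfl⟩
    simp [he]
  · intro hu
    exact ⟨u, by simp [mem_ker.mp hu]⟩

variable {f : M →ₗ[R] N}

theorem injective_mk_apply_smul_map_ker (hf : Injective f) (he : φ e = 1) :
    Injective fun m : R => (Submodule.Quotient.mk (f (m • e)) : N ⧸ (ker φ).map f) := by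
  intro m₁ m₂ h
  obtain ⟨w, hw, hfw⟩ := (Submodule.Quotient.eq _).mp h
  rw [← map_sub, ← sub_smul] at hfw
  have := congrArg φ (hf hfw)
  rw [mem_ker.mp hw, map_smul, he, smul_eq_mul, mul_one] at this
  exact sub_eq_zero.mp this.symm

theorem mk_eq_zero_range_iff_exists_mk_map_ker_eq (he : φ e = 1) (v : N) :
    (Submodule.Quotient.mk v : N ⧸ range f) = 0 ↔
      ∃ m : R, (Submodule.Quotient.mk v : N ⧸ (ker φ).map f) = Submodule.Quotient.mk (f (m • e)) := by
  simp only [Submodule.Quotient.mk_eq_zero, Submodule.Quotient.eq]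
  constructor
  · rintro ⟨w, rfl⟩
    refine ⟨φ w, w - φ w • e, ?_, map_sub f _ _⟩
    simp [he]
  · rintro ⟨m, w, -, hw⟩
    exact ⟨w + m • e, by rw [map_add, hw, sub_add_cancel]⟩

theorem shortExact_mk_apply_smul_of_eq_map_ker {K : Submodule R N} (hK : K = (ker φ).map f)
    (hf : Injective f) (he : φ e = 1) (q : N ⧸ K →+ N ⧸ range f)
    (hq : ∀ v, q (Submodule.Quotient.mk v) = Submodule.Quotient.mk v) :
    Injective (fun m : R => (Submodule.Quotient.mk (f (m • e)) : N ⧸ K)) ∧ Surjective q ∧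
      ∀ x, q x = 0 ↔ ∃ m : R, x = Submodule.Quotient.mk (f (m • e)) := by
  subst hK
  refine ⟨injective_mk_apply_smul_map_ker hf he, fun y => ?_, fun x => ?_⟩
  · obtain ⟨v, rfl⟩ := Submodule.Quotient.mk_surjective _ y
    exact ⟨_, hq v⟩
  · obtain ⟨v, rfl⟩ := Submodule.Quotient.mk_surjective _ x
    rw [hq]
    exact mk_eq_zero_range_iff_exists_mk_map_ker_eq he v

end ComplementOfLine

section

variable {S n : Type*} [CommRing S] [Fintype n] [DecidableEq n]

theorem Matrix.mulVecLin_one_sub_vecMulVec (u v : n → S) :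
    (1 - vecMulVec u v).mulVecLin = LinearMap.id - (dotProductBilin S S v).smulRight u := by
  ext w i
  simp [vecMulVec_apply, mul_comm]

theorem Matrix.range_mulVecLin_one_sub_add_sub_mul_vecMulVec (A : Matrix n n S) {e w : n → S}
    (he : w ⬝ᵥ e = 1) :
    range (1 - (A + vecMulVec e w - A * vecMulVec e w)).mulVecLin =
      (ker (dotProductBilin S S w)).map (1 - A).mulVecLin := by
  have hfactor : 1 - (A + vecMulVec e w - A * vecMulVec e w) = (1 - A) * (1 - vecMulVec e w) := by
    noncomm_ring
  rw [hfactor, mulVecLin_mul, range_comp, mulVecLin_one_sub_vecMulVec,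
    range_id_sub_smulRight he]

end

section

variable {S : Type*} [CommRing S] {N : ℕ} [NeZero N]

theorem Matrix.of_ite_val_eq_zero_eq_vecMulVec :
    (Matrix.of fun i _ => if (i : ℕ) = 0 then 1 else 0 : Matrix (Fin N) (Fin N) S) =
      vecMulVec (Pi.single 0 1) 1 := by
  ext i j
  simp [vecMulVec_apply, Pi.single_apply, Fin.val_eq_zero_iff]

theorem ite_val_eq_zero_eq_smul_single (m : S) :
    (fun i : Fin N => if (i : ℕ) = 0 then m else 0) = m • Pi.single 0 1 := by
  ext i
  simp [Pi.single_apply, Fin.val_eq_zero_iff]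

end

/-- If det(I-A) ≠ 0, then 0 → ℤ →^{ι̂_A} ℤ^N/(I-Â)ℤ^N →^{q̂_A} ℤ^N/(I-A)ℤ^N → 0
is a short exact sequence. -/
theorem stmt9 (N : ℕ) (hN : 1 < N) (A : Matrix (Fin N) (Fin N) ℤ)
    (hdet : (1 - A).det ≠ 0) :
    let R : Matrix (Fin N) (Fin N) ℤ := Matrix.of fun i _ => if (i : ℕ) = 0 then 1 else 0
    let Ahat := A + R - A * R
    let ι : ℤ → (Fin N → ℤ) ⧸ LinearMap.range (1 - Ahat).mulVecLin :=
      fun m => Submodule.Quotient.mk ((1 - A).mulVec (fun i => if (i : ℕ) = 0 then m else 0))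
    ∀ q : ((Fin N → ℤ) ⧸ LinearMap.range (1 - Ahat).mulVecLin) →+
          ((Fin N → ℤ) ⧸ LinearMap.range (1 - A).mulVecLin),
      (∀ v : Fin N → ℤ, q (Submodule.Quotient.mk v) = Submodule.Quotient.mk v) →
      Function.Injective ι ∧ Function.Surjective q ∧
        (∀ x, q x = 0 ↔ ∃ m : ℤ, x = ι m) := by
  intro R Ahat ι q hq
  have : NeZero N := ⟨by omega⟩
  have hK : range (1 - Ahat).mulVecLin = (ker (dotProductBilin ℤ ℤ 1)).map (1 - A).mulVecLin := by
    simp only [Ahat, R, of_ite_val_eq_zero_eq_vecMulVec]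
    exact range_mulVecLin_one_sub_add_sub_mul_vecMulVec A (by simp)
  have hf : Injective (1 - A).mulVecLin :=
    (injective_iff_map_eq_zero _).mpr fun v hv => eq_zero_of_mulVec_eq_zero hdet hv
  have hι : ι = fun m => Submodule.Quotient.mk ((1 - A).mulVecLin (m • Pi.single 0 1)) := by
    funext m
    simp only [ι, ite_val_eq_zero_eq_smul_single, mulVecLin_apply]
  rw [hι]
  exact shortExact_mk_apply_smul_of_eq_map_ker hK hf (by simp) q hq
end

section
/- The composite q̂_A ∘ ι̂_A : ℤ → ℤ^N/(I-A)ℤ^N is the zero homomorphism, and the kernel of q̂_A equals the image of ι̂_A. -/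
/-!
Write `R = e₀ 𝟙ᵀ`, so that `R w = (∑ⱼ wⱼ) e₀` and `I - Â = (I - A)(I - R)`. Hence every
`(I - A) w` is congruent modulo `(I - Â)ℤ^N` to `(I - A)((∑ⱼ wⱼ) e₀)`: the kernel of `q̂_A`,
which is the image of `(I - A)ℤ^N`, is exactly the image of `ι̂_A`.
-/

namespace Matrix

variable {n R : Type*} [Fintype n] [CommRing R]

theorem of_const_col_mulVec (u w : n → R) : (of fun i (_ : n) => u i) *ᵥ w = (∑ j, w j) • u := by
  ext i
  simp [mulVec, dotProduct, ← Finset.mul_sum, mul_comm]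

theorem one_sub_add_sub_mul [DecidableEq n] (A C : Matrix n n R) :
    1 - (A + C - A * C) = (1 - A) * (1 - C) := by
  noncomm_ring

theorem mulVec_sub_mulVec_sum_smul_mem_range [DecidableEq n] (B : Matrix n n R) (u w : n → R) :
    B *ᵥ w - B *ᵥ ((∑ j, w j) • u) ∈
      LinearMap.range (B * (1 - of fun i (_ : n) => u i)).mulVecLin :=
  ⟨w, by rw [mulVecLin_apply, ← mulVec_mulVec, sub_mulVec, one_mulVec, of_const_col_mulVec,
    mulVec_sub]⟩

end Matrix

theorem stmt10_general (N : ℕ) (A : Matrix (Fin N) (Fin N) ℤ) :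
    let R : Matrix (Fin N) (Fin N) ℤ := Matrix.of fun i _ => if (i : ℕ) = 0 then 1 else 0
    let Ahat := A + R - A * R
    let ι : ℤ → (Fin N → ℤ) ⧸ LinearMap.range (1 - Ahat).mulVecLin :=
      fun m => Submodule.Quotient.mk ((1 - A).mulVec (fun i => if (i : ℕ) = 0 then m else 0))
    ∀ q : ((Fin N → ℤ) ⧸ LinearMap.range (1 - Ahat).mulVecLin) →+
          ((Fin N → ℤ) ⧸ LinearMap.range (1 - A).mulVecLin),
      (∀ v : Fin N → ℤ, q (Submodule.Quotient.mk v) = Submodule.Quotient.mk v) →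
      (∀ m : ℤ, q (ι m) = 0) ∧ (∀ x, q x = 0 ↔ ∃ m : ℤ, x = ι m) := by
  intro R Ahat ι q hq
  set e : Fin N → ℤ := fun i => if (i : ℕ) = 0 then 1 else 0
  have hι : ∀ m, ι m = Submodule.Quotient.mk ((1 - A).mulVec (m • e)) := fun m => by
    have : (fun i : Fin N => if (i : ℕ) = 0 then m else 0) = m • e := by ext i; simp [e]
    simp only [ι, this]
  have hker : ∀ v, q (Submodule.Quotient.mk v) = 0 ↔ v ∈ LinearMap.range (1 - A).mulVecLin :=
    fun v => by rw [hq, Submodule.Quotient.mk_eq_zero]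
  have hqι : ∀ m, q (ι m) = 0 := fun m => (hker _).2 ⟨_, rfl⟩
  refine ⟨hqι, fun x => ⟨fun hx => ?_, by rintro ⟨m, rfl⟩; exact hqι m⟩⟩
  induction x using Submodule.Quotient.induction_on with | H v => ?_
  obtain ⟨w, rfl⟩ := (hker v).1 hx
  refine ⟨∑ j, w j, ?_⟩
  rw [hι, Matrix.mulVecLin_apply, Submodule.Quotient.eq, Matrix.one_sub_add_sub_mul]
  exact Matrix.mulVec_sub_mulVec_sum_smul_mem_range _ e w

/-- q̂_A ∘ ι̂_A = 0 and Ker(q̂_A) = Im(ι̂_A). -/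
theorem stmt10 (N : ℕ) (hN : 1 < N) (A : Matrix (Fin N) (Fin N) ℤ) :
    let R : Matrix (Fin N) (Fin N) ℤ := Matrix.of fun i _ => if (i : ℕ) = 0 then 1 else 0
    let Ahat := A + R - A * R
    let ι : ℤ → (Fin N → ℤ) ⧸ LinearMap.range (1 - Ahat).mulVecLin :=
      fun m => Submodule.Quotient.mk ((1 - A).mulVec (fun i => if (i : ℕ) = 0 then m else 0))
    ∀ q : ((Fin N → ℤ) ⧸ LinearMap.range (1 - Ahat).mulVecLin) →+
          ((Fin N → ℤ) ⧸ LinearMap.range (1 - A).mulVecLin),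
      (∀ v : Fin N → ℤ, q (Submodule.Quotient.mk v) = Submodule.Quotient.mk v) →
      (∀ m : ℤ, q (ι m) = 0) ∧ (∀ x, q x = 0 ↔ ∃ m : ℤ, x = ι m) :=
  stmt10_general N A
end

section
/- For the Fibonacci matrix F = [[1,1],[1,0]], the group ℤ²/(I-F̂)ℤ² is isomorphic to ℤ, and under a suitable isomorphism the element -ι̂_F(1) - [1_2] corresponds to -2, while ι̂_F(1) corresponds to -1. -/
/-- For the Fibonacci matrix F = [[1,1],[1,0]], ℤ²/(I-F̂)ℤ² ≅ ℤ and under a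
suitable isomorphism -ι̂_F(1) - [1_2] corresponds to -2 while ι̂_F(1)
corresponds to -1. -/
theorem stmt13 :
    let F : Matrix (Fin 2) (Fin 2) ℤ := !![1, 1; 1, 0]
    let R : Matrix (Fin 2) (Fin 2) ℤ := !![1, 1; 0, 0]
    let Fhat := F + R - F * R
    let ι1 : (Fin 2 → ℤ) ⧸ LinearMap.range (1 - Fhat).mulVecLin :=
      Submodule.Quotient.mk ((1 - F).mulVec ![1, 0])
    ∃ e : ((Fin 2 → ℤ) ⧸ LinearMap.range (1 - Fhat).mulVecLin) ≃+ ℤ,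
      e (-ι1 - Submodule.Quotient.mk ![1, 1]) = -2 ∧ e ι1 = -1 := by
  intro F R Fhat ι1
  have hFhat : Fhat = !![1, 1; 0, -1] := by
    show F + R - F * R = _
    simp [F, R]
  have hM : (1 - Fhat) = !![0, -1; 0, 2] := by
    rw [hFhat]
    ext i j
    fin_cases i <;> fin_cases j <;>
      simp [Matrix.one_apply]
  -- the linear functional (x, y) ↦ 2x + y
  let φ : (Fin 2 → ℤ) →ₗ[ℤ] ℤ :=
    (2 : ℤ) • (LinearMap.proj 0) + LinearMap.proj 1
  have hφ : ∀ v : Fin 2 → ℤ, φ v = 2 * v 0 + v 1 := fun v => rfl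
  have hle : LinearMap.range (1 - Fhat).mulVecLin ≤ LinearMap.ker φ := by
    rintro _ ⟨v, rfl⟩
    simp only [LinearMap.mem_ker, Matrix.mulVecLin_apply, hφ, hM]
    simp [Matrix.mulVec, dotProduct, Fin.sum_univ_two]
  let ψ := Submodule.liftQ _ φ hle
  have hψ : ∀ v : Fin 2 → ℤ, ψ (Submodule.Quotient.mk v) = 2 * v 0 + v 1 :=
    fun v => rfl
  have hinj : Function.Injective ψ := by
    rw [← LinearMap.ker_eq_bot]
    apply Submodule.ker_liftQ_eq_bot
    intro v hv
    rw [LinearMap.mem_ker, hφ] at hv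
    refine ⟨![0, - v 0], ?_⟩
    rw [hM]
    funext i
    fin_cases i <;>
      simp [Matrix.mulVecLin_apply, Matrix.mulVec, dotProduct, Fin.sum_univ_two] <;>
      omega
  have hsurj : Function.Surjective ψ := by
    intro n
    exact ⟨Submodule.Quotient.mk ![0, n], by simp [hψ]⟩
  refine ⟨(LinearEquiv.ofBijective ψ ⟨hinj, hsurj⟩).toAddEquiv, ?_, ?_⟩
  · show ψ (-ι1 - Submodule.Quotient.mk ![1, 1]) = -2
    rw [map_sub, map_neg]
    show -(ψ (Submodule.Quotient.mk ((1 - F).mulVec ![1, 0]))) -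
      ψ (Submodule.Quotient.mk ![1, 1]) = -2
    rw [hψ, hψ]
    simp [F, Matrix.mulVec, dotProduct, Fin.sum_univ_two, Matrix.one_apply]
  · show ψ (Submodule.Quotient.mk ((1 - F).mulVec ![1, 0])) = -1
    rw [hψ]
    simp [F, Matrix.mulVec, dotProduct, Fin.sum_univ_two, Matrix.one_apply]
end

section
/- For the matrix A₁ = [[0,0,1],[1,0,1],[1,1,1]], the quotient ℤ³/(I-A₁)ℤ³ is isomorphic to ℤ/3ℤ with the class of -(1,1,1)ᵗ corresponding to 2, and ℤ³/(I-Â₁)ℤ³ is isomorphic to ℤ. -/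
private def g3 : (Fin 3 → ℤ) →ₗ[ℤ] ℤ where
  toFun x := 2 * x 0 + x 1 + x 2
  map_add' x y := by simp; ring
  map_smul' c x := by simp; ring

private def phi3 : (Fin 3 → ℤ) →ₗ[ℤ] ZMod 3 :=
  (Algebra.linearMap ℤ (ZMod 3)).comp g3

private def psi3 : (Fin 3 → ℤ) →ₗ[ℤ] ℤ where
  toFun x := 2 * x 0 + x 1 + 4 * x 2
  map_add' x y := by simp; ring
  map_smul' c x := by simp; ring

/-- For A₁ = [[0,0,1],[1,0,1],[1,1,1]]: ℤ³/(I-A₁)ℤ³ ≅ ℤ/3ℤ with [-(1,1,1)ᵗ] ↦ 2,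
and ℤ³/(I-Â₁)ℤ³ ≅ ℤ. -/
theorem stmt14 :
    let A : Matrix (Fin 3) (Fin 3) ℤ := !![0, 0, 1; 1, 0, 1; 1, 1, 1]
    let R : Matrix (Fin 3) (Fin 3) ℤ := !![1, 1, 1; 0, 0, 0; 0, 0, 0]
    let Ahat := A + R - A * R
    (∃ e : ((Fin 3 → ℤ) ⧸ LinearMap.range (1 - A).mulVecLin) ≃+ ZMod 3,
      e (Submodule.Quotient.mk (-![1, 1, 1])) = 2) ∧
    Nonempty (((Fin 3 → ℤ) ⧸ LinearMap.range (1 - Ahat).mulVecLin) ≃+ ℤ) := by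
  intro A R Ahat
  have hAv : ∀ v : Fin 3 → ℤ, (1 - A).mulVecLin v
      = ![v 0 - v 2, -v 0 + v 1 - v 2, -v 0 - v 1] := by
    intro v; funext i
    fin_cases i <;>
      simp [A, Matrix.mulVecLin_apply, Matrix.mulVec, dotProduct,
        Fin.sum_univ_three, Matrix.sub_apply, Matrix.one_apply] <;> ring
  have hBv : ∀ v : Fin 3 → ℤ, (1 - Ahat).mulVecLin v
      = ![-v 1 - 2 * v 2, 2 * v 1, v 2] := by
    intro v; funext i
    fin_cases i <;>
      simp [Ahat, A, R, Matrix.mulVecLin_apply, Matrix.mulVec, dotProduct,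
        Matrix.mul_apply, Fin.sum_univ_three, Matrix.sub_apply, Matrix.add_apply,
        Matrix.one_apply] <;> ring
  constructor
  · -- first part
    have hker : LinearMap.range (1 - A).mulVecLin = LinearMap.ker phi3 := by
      ext x
      constructor
      · rintro ⟨v, rfl⟩
        rw [hAv]
        show ((2 * ![v 0 - v 2, -v 0 + v 1 - v 2, -v 0 - v 1] 0
            + ![v 0 - v 2, -v 0 + v 1 - v 2, -v 0 - v 1] 1
            + ![v 0 - v 2, -v 0 + v 1 - v 2, -v 0 - v 1] 2 : ℤ) : ZMod 3) = 0
        rw [ZMod.intCast_zmod_eq_zero_iff_dvd]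
        exact ⟨-v 2, by simp; ring⟩
      · intro hx
        have hx' : ((2 * x 0 + x 1 + x 2 : ℤ) : ZMod 3) = 0 := hx
        rw [ZMod.intCast_zmod_eq_zero_iff_dvd] at hx'
        obtain ⟨k, hk⟩ := hx'
        push_cast at hk
        refine ⟨![x 0 - k, k - x 0 - x 2, -k], ?_⟩
        rw [hAv]
        funext i
        fin_cases i <;> simp <;> omega
    have hsurj : Function.Surjective phi3 := by
      intro y
      obtain ⟨n, rfl⟩ := ZMod.intCast_surjective (n := 3) y
      exact ⟨![0, n, 0], by simp [phi3, g3]⟩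
    let e₁ := Submodule.quotEquivOfEq _ _ hker
    let e₂ := phi3.quotKerEquivOfSurjective hsurj
    refine ⟨(e₁.trans e₂).toAddEquiv, ?_⟩
    have h2 : ∀ x, e₂ (Submodule.Quotient.mk x) = phi3 x := fun x => by
      simp [e₂, LinearMap.quotKerEquivOfSurjective, LinearEquiv.ofTop_apply,
        LinearMap.quotKerEquivRange_apply_mk]
    show (e₁.trans e₂) (Submodule.Quotient.mk (-![1, 1, 1])) = 2
    rw [LinearEquiv.trans_apply]
    rw [show e₁ (Submodule.Quotient.mk (-![1, 1, 1]))
        = Submodule.Quotient.mk (-![1, 1, 1]) from Submodule.quotEquivOfEq_mk _ _ hker _]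
    rw [h2]
    show ((2 * (-![1, 1, 1] : Fin 3 → ℤ) 0 + (-![1, 1, 1] : Fin 3 → ℤ) 1
        + (-![1, 1, 1] : Fin 3 → ℤ) 2 : ℤ) : ZMod 3) = 2
    norm_num
    decide
  · -- second part
    have hker : LinearMap.range (1 - Ahat).mulVecLin = LinearMap.ker psi3 := by
      ext x
      constructor
      · rintro ⟨v, rfl⟩
        rw [hBv]
        simp only [LinearMap.mem_ker, psi3, LinearMap.coe_mk, AddHom.coe_mk]
        simp; ring
      · intro hx
        have hx' : 2 * x 0 + x 1 + 4 * x 2 = 0 := hx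
        refine ⟨![0, -x 0 - 2 * x 2, x 2], ?_⟩
        rw [hBv]
        funext i
        fin_cases i <;> simp <;> linarith
    have hsurj : Function.Surjective psi3 := fun n => ⟨![0, n, 0], by simp [psi3]⟩
    let e₁ := Submodule.quotEquivOfEq _ _ hker
    let e₂ := psi3.quotKerEquivOfSurjective hsurj
    exact ⟨(e₁.trans e₂).toAddEquiv⟩
end

section
/- For the matrix A₂ = [[0,1,1],[1,0,1],[1,1,1]], the quotient ℤ³/(I-A₂)ℤ³ is isomorphic to ℤ/4ℤ, and ℤ³/(I-Â₂)ℤ³ is isomorphic to ℤ ⊕ ℤ/2ℤ. -/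
private def f1 : (Fin 3 → ℤ) →+ ZMod 4 where
  toFun x := ((3 * x 0 + x 1 + 2 * x 2 : ℤ) : ZMod 4)
  map_zero' := by simp
  map_add' a b := by
    push_cast
    simp only [Pi.add_apply]
    push_cast
    ring

private def f2 : (Fin 3 → ℤ) →+ ℤ × ZMod 2 where
  toFun x := (x 0 + x 1 + 2 * x 2, ((x 1 : ℤ) : ZMod 2))
  map_zero' := by simp
  map_add' a b := by
    simp only [Pi.add_apply, Prod.mk_add_mk, Prod.mk.injEq]
    constructor
    · ring
    · push_cast; ring

/-- For A₂ = [[0,1,1],[1,0,1],[1,1,1]]: ℤ³/(I-A₂)ℤ³ ≅ ℤ/4ℤ and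
ℤ³/(I-Â₂)ℤ³ ≅ ℤ ⊕ ℤ/2ℤ. -/
theorem stmt15 :
    let A : Matrix (Fin 3) (Fin 3) ℤ := !![0, 1, 1; 1, 0, 1; 1, 1, 1]
    let R : Matrix (Fin 3) (Fin 3) ℤ := !![1, 1, 1; 0, 0, 0; 0, 0, 0]
    let Ahat := A + R - A * R
    Nonempty (((Fin 3 → ℤ) ⧸ LinearMap.range (1 - A).mulVecLin) ≃+ ZMod 4) ∧
    Nonempty (((Fin 3 → ℤ) ⧸ LinearMap.range (1 - Ahat).mulVecLin) ≃+ ℤ × ZMod 2) := by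
  intro A R Ahat
  have hM : (1 - A) = !![1, -1, -1; -1, 1, -1; -1, -1, 0] := by
    show (1 : Matrix (Fin 3) (Fin 3) ℤ) - A = _
    have : (1 : Matrix (Fin 3) (Fin 3) ℤ) = !![1,0,0;0,1,0;0,0,1] := by
      ext i j; fin_cases i <;> fin_cases j <;> simp [Matrix.one_apply, Matrix.vecHead, Matrix.vecTail]
    rw [this]
    show !![(1:ℤ),0,0;0,1,0;0,0,1] - !![0, 1, 1; 1, 0, 1; 1, 1, 1] = _
    ext i j; fin_cases i <;> fin_cases j <;> simp [Matrix.vecHead, Matrix.vecTail]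
  have hM' : (1 - Ahat) = !![0, -2, -2; 0, 2, 0; 0, 0, 1] := by
    show (1 : Matrix (Fin 3) (Fin 3) ℤ) - (A + R - A * R) = _
    have h1 : (1 : Matrix (Fin 3) (Fin 3) ℤ) = !![1,0,0;0,1,0;0,0,1] := by
      ext i j; fin_cases i <;> fin_cases j <;> simp [Matrix.one_apply, Matrix.vecHead, Matrix.vecTail]
    have h2 : A * R = !![0,0,0;1,1,1;1,1,1] := by
      show !![(0:ℤ), 1, 1; 1, 0, 1; 1, 1, 1] * !![1, 1, 1; 0, 0, 0; 0, 0, 0] = _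
      ext i j
      fin_cases i <;> fin_cases j <;>
        simp [Matrix.mul_apply, Fin.sum_univ_three, Matrix.vecHead, Matrix.vecTail]
    rw [h1, h2]
    show !![(1:ℤ),0,0;0,1,0;0,0,1] - (!![0, 1, 1; 1, 0, 1; 1, 1, 1] + !![1, 1, 1; 0, 0, 0; 0, 0, 0] - !![0,0,0;1,1,1;1,1,1]) = _
    ext i j; fin_cases i <;> fin_cases j <;> simp [Matrix.vecHead, Matrix.vecTail]
  constructor
  · -- first part
    have hker : LinearMap.range (1 - A).mulVecLin = LinearMap.ker f1.toIntLinearMap := by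
      rw [hM]
      ext x
      simp only [LinearMap.mem_range, LinearMap.mem_ker, AddMonoidHom.coe_toIntLinearMap, f1,
        AddMonoidHom.coe_mk, ZeroHom.coe_mk, Matrix.mulVecLin_apply]
      constructor
      · rintro ⟨y, rfl⟩
        have h0 : (!![1, -1, -1; -1, 1, -1; -1, -1, 0].mulVec y) 0 = y 0 - y 1 - y 2 := by
          simp [Matrix.mulVec, dotProduct, Fin.sum_univ_three]; ring
        have h1 : (!![1, -1, -1; -1, 1, -1; -1, -1, 0].mulVec y) 1 = -y 0 + y 1 - y 2 := by
          simp [Matrix.mulVec, dotProduct, Fin.sum_univ_three]; ring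
        have h2 : (!![1, -1, -1; -1, 1, -1; -1, -1, 0].mulVec y) 2 = -y 0 - y 1 := by
          simp [Matrix.mulVec, dotProduct, Fin.sum_univ_three]; ring
        rw [h0, h1, h2]
        have : 3 * (y 0 - y 1 - y 2) + (-y 0 + y 1 - y 2) + 2 * (-y 0 - y 1)
            = 4 * (-(y 1) - y 2) := by ring
        rw [this]
        exact (ZMod.intCast_zmod_eq_zero_iff_dvd _ 4).mpr ⟨_, rfl⟩
      · intro h
        rw [ZMod.intCast_zmod_eq_zero_iff_dvd] at h
        obtain ⟨k, hk⟩ := h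
        refine ⟨![x 0 - k, k - x 0 - x 2, x 0 + x 2 - 2 * k], ?_⟩
        funext i
        fin_cases i <;>
          simp [Matrix.mulVec, dotProduct, Fin.sum_univ_three] <;> omega
    have hsurj : Function.Surjective f1.toIntLinearMap := by
      intro z
      obtain ⟨n, rfl⟩ := ZMod.intCast_surjective z
      exact ⟨![0, n, 0], by simp [f1]⟩
    exact ⟨((Submodule.quotEquivOfEq _ _ hker).trans
      (f1.toIntLinearMap.quotKerEquivOfSurjective hsurj)).toAddEquiv⟩
  · have hker : LinearMap.range (1 - Ahat).mulVecLin = LinearMap.ker f2.toIntLinearMap := by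
      rw [hM']
      ext x
      simp only [LinearMap.mem_range, LinearMap.mem_ker, AddMonoidHom.coe_toIntLinearMap, f2,
        AddMonoidHom.coe_mk, ZeroHom.coe_mk, Matrix.mulVecLin_apply, Prod.mk_eq_zero]
      constructor
      · rintro ⟨y, rfl⟩
        have h0 : (!![0, -2, -2; 0, 2, 0; 0, 0, 1].mulVec y) 0 = -2 * y 1 - 2 * y 2 := by
          simp [Matrix.mulVec, dotProduct, Fin.sum_univ_three]; ring
        have h1 : (!![0, -2, -2; 0, 2, 0; 0, 0, 1].mulVec y) 1 = 2 * y 1 := by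
          simp [Matrix.mulVec, dotProduct, Fin.sum_univ_three]
        have h2 : (!![0, -2, -2; 0, 2, 0; 0, 0, 1].mulVec y) 2 = y 2 := by
          simp [Matrix.mulVec, dotProduct, Fin.sum_univ_three]
        rw [h0, h1, h2]
        constructor
        · ring
        · exact (ZMod.intCast_zmod_eq_zero_iff_dvd _ 2).mpr ⟨_, rfl⟩
      · rintro ⟨h1, h2⟩
        rw [ZMod.intCast_zmod_eq_zero_iff_dvd] at h2
        obtain ⟨s, hs⟩ := h2
        refine ⟨![0, s, x 2], ?_⟩
        funext i
        fin_cases i <;>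
          simp [Matrix.mulVec, dotProduct, Fin.sum_univ_three] <;> omega
    have hsurj : Function.Surjective f2.toIntLinearMap := by
      rintro ⟨a, b⟩
      obtain ⟨n, rfl⟩ := ZMod.intCast_surjective b
      refine ⟨![a - n, n, 0], ?_⟩
      simp [f2]
    exact ⟨((Submodule.quotEquivOfEq _ _ hker).trans
      (f2.toIntLinearMap.quotKerEquivOfSurjective hsurj)).toAddEquiv⟩
end

section
/- For the matrix A₃ = [[0,1,1],[1,0,1],[1,1,0]], the quotient ℤ³/(I-A₃)ℤ³ is isomorphic to ℤ/2ℤ ⊕ ℤ/2ℤ, and ℤ³/(I-Â₃)ℤ³ is isomorphic to ℤ ⊕ ℤ/2ℤ ⊕ ℤ/2ℤ. -/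
/-- For A₃ = [[0,1,1],[1,0,1],[1,1,0]]: ℤ³/(I-A₃)ℤ³ ≅ ℤ/2ℤ ⊕ ℤ/2ℤ and
ℤ³/(I-Â₃)ℤ³ ≅ ℤ ⊕ ℤ/2ℤ ⊕ ℤ/2ℤ. -/
theorem stmt16 :
    let A : Matrix (Fin 3) (Fin 3) ℤ := !![0, 1, 1; 1, 0, 1; 1, 1, 0]
    let R : Matrix (Fin 3) (Fin 3) ℤ := !![1, 1, 1; 0, 0, 0; 0, 0, 0]
    let Ahat := A + R - A * R
    Nonempty (((Fin 3 → ℤ) ⧸ LinearMap.range (1 - A).mulVecLin) ≃+ ZMod 2 × ZMod 2) ∧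
    Nonempty (((Fin 3 → ℤ) ⧸ LinearMap.range (1 - Ahat).mulVecLin) ≃+
      ℤ × ZMod 2 × ZMod 2) := by
  intro A R Ahat
  constructor
  · -- first quotient
    let f : (Fin 3 → ℤ) →ₗ[ℤ] ZMod 2 × ZMod 2 :=
      { toFun := fun x => (((x 0 + x 1 : ℤ) : ZMod 2), ((x 0 + x 2 : ℤ) : ZMod 2))
        map_add' := by
          intro x y
          simp only [Pi.add_apply, Prod.mk_add_mk, Prod.mk.injEq]
          constructor <;> · push_cast; ring
        map_smul' := by
          intro c x
          simp only [Pi.smul_apply, smul_eq_mul, Prod.smul_mk, RingHom.id_apply, Prod.mk.injEq]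
          constructor <;> · rw [zsmul_eq_mul]; push_cast; ring }
    have hsurj : Function.Surjective f := by
      intro p
      obtain ⟨a, ha⟩ := ZMod.intCast_surjective p.1
      obtain ⟨b, hb⟩ := ZMod.intCast_surjective p.2
      exact ⟨![0, a, b], by simp [f, ha, hb, Prod.ext_iff]⟩
    have hker : LinearMap.range (1 - A).mulVecLin = LinearMap.ker f := by
      ext x
      constructor
      · rintro ⟨v, rfl⟩
        simp only [Matrix.mulVecLin_apply, LinearMap.mem_ker]
        have h0 : (1 - A).mulVec v 0 = v 0 - v 1 - v 2 := by
          simp [A, Matrix.mulVec, dotProduct, Fin.sum_univ_three, Matrix.one_apply]; ring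
        have h1 : (1 - A).mulVec v 1 = -v 0 + v 1 - v 2 := by
          simp [A, Matrix.mulVec, dotProduct, Fin.sum_univ_three, Matrix.one_apply]; ring
        have h2 : (1 - A).mulVec v 2 = -v 0 - v 1 + v 2 := by
          simp [A, Matrix.mulVec, dotProduct, Fin.sum_univ_three, Matrix.one_apply]; ring
        simp only [f, LinearMap.coe_mk, AddHom.coe_mk, h0, h1, h2, Prod.mk_eq_zero]
        constructor
        · have : (v 0 - v 1 - v 2) + (-v 0 + v 1 - v 2) = 2 * (-v 2) := by ring
          rw [this, ZMod.intCast_zmod_eq_zero_iff_dvd]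
          exact ⟨-v 2, by push_cast; ring⟩
        · have : (v 0 - v 1 - v 2) + (-v 0 - v 1 + v 2) = 2 * (-v 1) := by ring
          rw [this, ZMod.intCast_zmod_eq_zero_iff_dvd]
          exact ⟨-v 1, by push_cast; ring⟩
      · intro hx
        simp only [f, LinearMap.mem_ker, LinearMap.coe_mk, AddHom.coe_mk, Prod.mk_eq_zero] at hx
        obtain ⟨h1, h2⟩ := hx
        rw [ZMod.intCast_zmod_eq_zero_iff_dvd] at h1 h2
        obtain ⟨a, ha⟩ := h1
        obtain ⟨b, hb⟩ := h2
        refine ⟨![x 0 - a - b, -b, -a], ?_⟩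
        funext i
        fin_cases i <;>
          simp [A, Matrix.mulVecLin_apply, Matrix.mulVec, dotProduct,
            Fin.sum_univ_three, Matrix.one_apply] <;> omega
    refine ⟨((Submodule.quotEquivOfEq _ _ hker).trans
      (f.quotKerEquivOfSurjective hsurj)).toAddEquiv⟩
  · -- second quotient
    have hM : (1 - Ahat) = !![0, -2, -2; 0, 2, 0; 0, 0, 2] := by
      ext i j
      fin_cases i <;> fin_cases j <;>
        simp [Ahat, A, R, Matrix.mul_apply, Fin.sum_univ_three, Matrix.one_apply,
          Matrix.vecHead, Matrix.vecTail]
    let f : (Fin 3 → ℤ) →ₗ[ℤ] ℤ × ZMod 2 × ZMod 2 :=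
      { toFun := fun x => (x 0 + x 1 + x 2, ((x 1 : ℤ) : ZMod 2), ((x 2 : ℤ) : ZMod 2))
        map_add' := by
          intro x y
          simp only [Pi.add_apply, Prod.mk_add_mk, Prod.mk.injEq]
          refine ⟨by ring, by push_cast; ring, by push_cast; ring⟩
        map_smul' := by
          intro c x
          simp only [Pi.smul_apply, smul_eq_mul, Prod.smul_mk, RingHom.id_apply, Prod.mk.injEq]
          refine ⟨by ring, ?_, ?_⟩ <;> · rw [zsmul_eq_mul]; push_cast; ring }
    have hsurj : Function.Surjective f := by
      intro p
      obtain ⟨b, hb⟩ := ZMod.intCast_surjective p.2.1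
      obtain ⟨c, hc⟩ := ZMod.intCast_surjective p.2.2
      exact ⟨![p.1 - b - c, b, c], by simp [f, hb, hc, Prod.ext_iff]; ring⟩
    have hker : LinearMap.range (1 - Ahat).mulVecLin = LinearMap.ker f := by
      rw [hM]
      ext x
      constructor
      · rintro ⟨v, rfl⟩
        simp only [Matrix.mulVecLin_apply, LinearMap.mem_ker]
        have h0 : (!![0, -2, -2; 0, 2, 0; 0, 0, 2] : Matrix (Fin 3) (Fin 3) ℤ).mulVec v 0
            = -2 * v 1 - 2 * v 2 := by
          simp [Matrix.mulVec, dotProduct, Fin.sum_univ_three]; ring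
        have h1 : (!![0, -2, -2; 0, 2, 0; 0, 0, 2] : Matrix (Fin 3) (Fin 3) ℤ).mulVec v 1
            = 2 * v 1 := by
          simp [Matrix.mulVec, dotProduct, Fin.sum_univ_three]
        have h2 : (!![0, -2, -2; 0, 2, 0; 0, 0, 2] : Matrix (Fin 3) (Fin 3) ℤ).mulVec v 2
            = 2 * v 2 := by
          simp [Matrix.mulVec, dotProduct, Fin.sum_univ_three]
        simp only [f, LinearMap.coe_mk, AddHom.coe_mk, h0, h1, h2, Prod.mk_eq_zero]
        refine ⟨by ring, ?_, ?_⟩ <;>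
          · rw [ZMod.intCast_zmod_eq_zero_iff_dvd]
            exact ⟨_, by push_cast; ring⟩
      · intro hx
        simp only [f, LinearMap.mem_ker, LinearMap.coe_mk, AddHom.coe_mk, Prod.mk_eq_zero] at hx
        obtain ⟨h0, h1, h2⟩ := hx
        rw [ZMod.intCast_zmod_eq_zero_iff_dvd] at h1 h2
        obtain ⟨b, hb⟩ := h1
        obtain ⟨c, hc⟩ := h2
        refine ⟨![0, b, c], ?_⟩
        funext i
        fin_cases i <;>
          simp [Matrix.mulVecLin_apply, Matrix.mulVec, dotProduct,
            Fin.sum_univ_three] <;> omega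
    refine ⟨((Submodule.quotEquivOfEq _ _ hker).trans
      (f.quotKerEquivOfSurjective hsurj)).toAddEquiv⟩
end

section
/- For A₅ = [[1,1,1],[1,1,1],[1,0,0]] and A₆ = A₅ᵗ = [[1,1,1],[1,1,0],[1,1,0]], one has ℤ³/(I-Â₅)ℤ³ ≅ ℤ while ℤ³/(I-Â₆)ℤ³ ≅ ℤ ⊕ ℤ/2ℤ; in particular these two quotient groups are not isomorphic. -/
private def f5 : (Fin 3 → ℤ) →ₗ[ℤ] ℤ where
  toFun v := 2 * v 0 + v 1 + v 2
  map_add' x y := by simp; ring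
  map_smul' c x := by simp; ring

private def f6 : (Fin 3 → ℤ) →ₗ[ℤ] ℤ × ZMod 2 where
  toFun v := (v 0 + v 1, (v 2 : ZMod 2))
  map_add' x y := by
    simp only [Pi.add_apply, Prod.mk_add_mk, Prod.mk.injEq]
    constructor
    · ring
    · push_cast; ring
  map_smul' c x := by
    simp only [Pi.smul_apply, RingHom.id_apply, Prod.smul_mk, smul_eq_mul, zsmul_eq_mul,
      Prod.mk.injEq]
    constructor
    · ring
    · push_cast; ring

/-- For A₅ = [[1,1,1],[1,1,1],[1,0,0]] and A₆ = A₅ᵗ: ℤ³/(I-Â₅)ℤ³ ≅ ℤ while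
ℤ³/(I-Â₆)ℤ³ ≅ ℤ ⊕ ℤ/2ℤ; in particular the two quotients are not isomorphic. -/
theorem stmt17 :
    let A5 : Matrix (Fin 3) (Fin 3) ℤ := !![1, 1, 1; 1, 1, 1; 1, 0, 0]
    let A6 : Matrix (Fin 3) (Fin 3) ℤ := !![1, 1, 1; 1, 1, 0; 1, 1, 0]
    let R : Matrix (Fin 3) (Fin 3) ℤ := !![1, 1, 1; 0, 0, 0; 0, 0, 0]
    let A5hat := A5 + R - A5 * R
    let A6hat := A6 + R - A6 * R
    Nonempty (((Fin 3 → ℤ) ⧸ LinearMap.range (1 - A5hat).mulVecLin) ≃+ ℤ) ∧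
    Nonempty (((Fin 3 → ℤ) ⧸ LinearMap.range (1 - A6hat).mulVecLin) ≃+ ℤ × ZMod 2) ∧
    ¬ Nonempty (((Fin 3 → ℤ) ⧸ LinearMap.range (1 - A5hat).mulVecLin) ≃+
        ((Fin 3 → ℤ) ⧸ LinearMap.range (1 - A6hat).mulVecLin)) := by
  intro A5 A6 R A5hat A6hat
  have h5 : (1 - A5hat) = !![0,-1,-1;0,1,0;0,1,2] := by
    show (1 : Matrix (Fin 3) (Fin 3) ℤ) - (A5 + R - A5 * R) = _
    ext i j
    fin_cases i <;> fin_cases j <;>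
      simp [A5, R, Matrix.mul_apply, Fin.sum_univ_three, Matrix.one_apply, Matrix.vecHead, Matrix.vecTail]
  have h6 : (1 - A6hat) = !![0,-1,-1;0,1,1;0,0,2] := by
    show (1 : Matrix (Fin 3) (Fin 3) ℤ) - (A6 + R - A6 * R) = _
    ext i j
    fin_cases i <;> fin_cases j <;>
      simp [A6, R, Matrix.mul_apply, Fin.sum_univ_three, Matrix.one_apply, Matrix.vecHead, Matrix.vecTail]
  have hr5 : LinearMap.range (1 - A5hat).mulVecLin = LinearMap.ker f5 := by
    rw [h5]
    ext x
    simp only [LinearMap.mem_range, LinearMap.mem_ker, Matrix.mulVecLin_apply, f5,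
      LinearMap.coe_mk, AddHom.coe_mk]
    constructor
    · rintro ⟨v, rfl⟩
      simp [Matrix.mulVec, dotProduct, Fin.sum_univ_three]
      ring
    · intro hx
      refine ⟨![0, x 1, -(x 0) - x 1], ?_⟩
      funext i
      fin_cases i <;>
        simp [Matrix.mulVec, dotProduct, Fin.sum_univ_three] <;> omega
  have hr6 : LinearMap.range (1 - A6hat).mulVecLin = LinearMap.ker f6 := by
    rw [h6]
    ext x
    simp only [LinearMap.mem_range, LinearMap.mem_ker, Matrix.mulVecLin_apply, f6,
      LinearMap.coe_mk, AddHom.coe_mk, Prod.mk_eq_zero]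
    constructor
    · rintro ⟨v, rfl⟩
      simp [Matrix.mulVec, dotProduct, Fin.sum_univ_three]
      constructor
      · ring
      · left; decide
    · rintro ⟨h1, h2⟩
      rw [ZMod.intCast_zmod_eq_zero_iff_dvd] at h2
      obtain ⟨k, hk⟩ := h2
      refine ⟨![0, x 1 - k, k], ?_⟩
      funext i
      fin_cases i <;>
        simp [Matrix.mulVec, dotProduct, Fin.sum_univ_three] <;> omega
  have hs5 : Function.Surjective f5 := by
    intro a
    exact ⟨![0, a, 0], by simp [f5]⟩
  have hs6 : Function.Surjective f6 := by
    rintro ⟨a, b⟩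
    obtain ⟨r, hr⟩ := ZMod.intCast_surjective b
    exact ⟨![a, 0, r], by simp [f6, hr]⟩
  have e5 : ((Fin 3 → ℤ) ⧸ LinearMap.range (1 - A5hat).mulVecLin) ≃+ ℤ :=
    ((Submodule.quotEquivOfEq _ _ hr5).trans (f5.quotKerEquivOfSurjective hs5)).toAddEquiv
  have e6 : ((Fin 3 → ℤ) ⧸ LinearMap.range (1 - A6hat).mulVecLin) ≃+ ℤ × ZMod 2 :=
    ((Submodule.quotEquivOfEq _ _ hr6).trans (f6.quotKerEquivOfSurjective hs6)).toAddEquiv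
  refine ⟨⟨e5⟩, ⟨e6⟩, ?_⟩
  rintro ⟨e⟩
  have E : ℤ ≃+ ℤ × ZMod 2 := (e5.symm.trans e).trans e6
  have h2 : (2 : ℤ) • E.symm (0, 1) = 0 := by
    rw [← map_zsmul]
    have : (2 : ℤ) • ((0 : ℤ), (1 : ZMod 2)) = 0 := by decide
    rw [this, map_zero]
  rw [smul_eq_mul] at h2
  have hx : E.symm (0, 1) = 0 := by omega
  have : ((0 : ℤ), (1 : ZMod 2)) = 0 := by
    have := congrArg E hx
    simpa using this
  exact absurd this (by decide)
end

section
/- For A₅ = [[1,1,1],[1,1,1],[1,0,0]] and its transpose A₆, the pairs (ℤ³/(I-A₅)ℤ³, [(1,1,1)ᵗ]) and (ℤ³/(I-A₆)ℤ³, [(1,1,1)ᵗ]) satisfy: both quotient groups are isomorphic to ℤ/2ℤ, but in one of them the class of (1,1,1)ᵗ is the nonzero element while in the other it is zero; hence there is no group isomorphism between the quotients carrying one distinguished class to the other. -/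
def fgen (c : Fin 3 → ℤ) : (Fin 3 → ℤ) →ₗ[ℤ] ZMod 2 where
  toFun v := ((c 0 * v 0 + c 1 * v 1 + c 2 * v 2 : ℤ) : ZMod 2)
  map_add' x y := by simp only [Pi.add_apply]; push_cast; ring
  map_smul' r x := by
    simp only [Pi.smul_apply, smul_eq_mul, RingHom.id_apply, zsmul_eq_mul]; push_cast; ring

noncomputable def quotEquiv (p : Submodule ℤ (Fin 3 → ℤ)) (f : (Fin 3 → ℤ) →ₗ[ℤ] ZMod 2)
    (h1 : p ≤ LinearMap.ker f) (h2 : LinearMap.ker f ≤ p) (hs : Function.Surjective f) :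
    ((Fin 3 → ℤ) ⧸ p) ≃+ ZMod 2 :=
  (LinearEquiv.ofBijective (p.liftQ f h1)
    ⟨by rw [← LinearMap.ker_eq_bot, Submodule.ker_liftQ_eq_bot] <;> exact h2,
     by intro z; obtain ⟨x, hx⟩ := hs z; exact ⟨Submodule.Quotient.mk x, hx⟩⟩).toAddEquiv

theorem quotEquiv_mk (p : Submodule ℤ (Fin 3 → ℤ)) (f : (Fin 3 → ℤ) →ₗ[ℤ] ZMod 2)
    (h1) (h2) (hs) (v : Fin 3 → ℤ) :
    quotEquiv p f h1 h2 hs (Submodule.Quotient.mk v) = f v := rfl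

/-- For A₅ = [[1,1,1],[1,1,1],[1,0,0]] and A₆ = A₅ᵗ: both ℤ³/(I-A₅)ℤ³ and
ℤ³/(I-A₆)ℤ³ are isomorphic to ℤ/2ℤ, the class of (1,1,1)ᵗ is nonzero in one
and zero in the other (up to swapping), and no isomorphism between the
quotients carries one distinguished class to the other. -/
theorem stmt18 :
    let A5 : Matrix (Fin 3) (Fin 3) ℤ := !![1, 1, 1; 1, 1, 1; 1, 0, 0]
    let A6 : Matrix (Fin 3) (Fin 3) ℤ := !![1, 1, 1; 1, 1, 0; 1, 1, 0]
    let Q5 := (Fin 3 → ℤ) ⧸ LinearMap.range (1 - A5).mulVecLin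
    let Q6 := (Fin 3 → ℤ) ⧸ LinearMap.range (1 - A6).mulVecLin
    let u5 : Q5 := Submodule.Quotient.mk ![1, 1, 1]
    let u6 : Q6 := Submodule.Quotient.mk ![1, 1, 1]
    (∃ e5 : Q5 ≃+ ZMod 2, ∃ e6 : Q6 ≃+ ZMod 2,
      (e5 u5 = 1 ∧ e6 u6 = 0) ∨ (e5 u5 = 0 ∧ e6 u6 = 1)) ∧
    ¬ ∃ φ : Q5 ≃+ Q6, φ u5 = u6 := by
  intro A5 A6 Q5 Q6 u5 u6
  have hM5 : (1 : Matrix (Fin 3) (Fin 3) ℤ) - A5 = !![0,-1,-1;-1,0,-1;-1,0,1] := by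
    show (1 : Matrix (Fin 3) (Fin 3) ℤ) - !![1,1,1;1,1,1;1,0,0] = _
    decide
  have hM6 : (1 : Matrix (Fin 3) (Fin 3) ℤ) - A6 = !![0,-1,-1;-1,0,0;-1,-1,1] := by
    show (1 : Matrix (Fin 3) (Fin 3) ℤ) - !![1,1,1;1,1,0;1,1,0] = _
    decide
  -- f5 = fgen ![0,1,1], f6 = fgen ![1,1,1]
  have h15 : LinearMap.range (1 - A5).mulVecLin ≤ LinearMap.ker (fgen ![0,1,1]) := by
    rintro x ⟨v, rfl⟩
    simp only [LinearMap.mem_ker, Matrix.mulVecLin_apply, hM5, fgen, LinearMap.coe_mk,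
      AddHom.coe_mk, Matrix.mulVec, dotProduct, Fin.sum_univ_three,
      Matrix.cons_val_zero, Matrix.cons_val_one, Matrix.head_cons,
      Matrix.cons_val_two, Matrix.tail_cons, Matrix.of_apply]
    rw [ZMod.intCast_zmod_eq_zero_iff_dvd]
    exact ⟨-(v 0), by ring⟩
  have h25 : LinearMap.ker (fgen ![0,1,1]) ≤ LinearMap.range (1 - A5).mulVecLin := by
    intro v hv
    simp only [LinearMap.mem_ker, fgen, LinearMap.coe_mk, AddHom.coe_mk,
      Matrix.cons_val_zero, Matrix.cons_val_one, Matrix.head_cons,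
      Matrix.cons_val_two, Matrix.tail_cons,
      ZMod.intCast_zmod_eq_zero_iff_dvd] at hv
    obtain ⟨k, hk⟩ := hv
    refine ⟨![-k, -(v 0) + k - v 2, v 2 - k], ?_⟩
    funext i
    fin_cases i <;>
      simp [hM5, Matrix.mulVecLin_apply, Matrix.mulVec, dotProduct,
        Fin.sum_univ_three, Matrix.of_apply] <;> omega
  have h16 : LinearMap.range (1 - A6).mulVecLin ≤ LinearMap.ker (fgen ![1,1,1]) := by
    rintro x ⟨v, rfl⟩
    simp only [LinearMap.mem_ker, Matrix.mulVecLin_apply, hM6, fgen, LinearMap.coe_mk,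
      AddHom.coe_mk, Matrix.mulVec, dotProduct, Fin.sum_univ_three,
      Matrix.cons_val_zero, Matrix.cons_val_one, Matrix.head_cons,
      Matrix.cons_val_two, Matrix.tail_cons, Matrix.of_apply]
    rw [ZMod.intCast_zmod_eq_zero_iff_dvd]
    exact ⟨-(v 0) - v 1, by ring⟩
  have h26 : LinearMap.ker (fgen ![1,1,1]) ≤ LinearMap.range (1 - A6).mulVecLin := by
    intro v hv
    simp only [LinearMap.mem_ker, fgen, LinearMap.coe_mk, AddHom.coe_mk,
      Matrix.cons_val_zero, Matrix.cons_val_one, Matrix.head_cons,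
      Matrix.cons_val_two, Matrix.tail_cons,
      ZMod.intCast_zmod_eq_zero_iff_dvd] at hv
    obtain ⟨k, hk⟩ := hv
    refine ⟨![-(v 1), v 1 - k, k - v 0 - v 1], ?_⟩
    funext i
    fin_cases i <;>
      simp [hM6, Matrix.mulVecLin_apply, Matrix.mulVec, dotProduct,
        Fin.sum_univ_three, Matrix.of_apply] <;> omega
  have hs5 : Function.Surjective (fgen ![0,1,1]) := by
    intro z
    refine ⟨![0, z.val, 0], ?_⟩
    simp only [fgen, LinearMap.coe_mk, AddHom.coe_mk, Matrix.cons_val_zero,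
      Matrix.cons_val_one, Matrix.head_cons, Matrix.cons_val_two, Matrix.tail_cons]
    push_cast
    simp [ZMod.natCast_val, ZMod.cast_id]
  have hs6 : Function.Surjective (fgen ![1,1,1]) := by
    intro z
    refine ⟨![z.val, 0, 0], ?_⟩
    simp only [fgen, LinearMap.coe_mk, AddHom.coe_mk, Matrix.cons_val_zero,
      Matrix.cons_val_one, Matrix.head_cons, Matrix.cons_val_two, Matrix.tail_cons]
    push_cast
    simp [ZMod.natCast_val, ZMod.cast_id]
  have hu5 : u5 = 0 := by
    rw [show u5 = Submodule.Quotient.mk ![1,1,1] from rfl, Submodule.Quotient.mk_eq_zero]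
    refine ⟨![-1, -1, 0], ?_⟩
    funext i
    fin_cases i <;>
      simp [hM5, Matrix.mulVecLin_apply, Matrix.mulVec, dotProduct,
        Fin.sum_univ_three, Matrix.of_apply]
  set e6 := quotEquiv _ (fgen ![1,1,1]) h16 h26 hs6 with he6
  have hu6 : e6 u6 = 1 := by
    rw [show u6 = Submodule.Quotient.mk ![1,1,1] from rfl, quotEquiv_mk]
    simp [fgen]
    decide
  constructor
  · refine ⟨quotEquiv _ (fgen ![0,1,1]) h15 h25 hs5, e6, Or.inr ⟨?_, hu6⟩⟩
    rw [hu5, map_zero]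
  · rintro ⟨φ, hφ⟩
    rw [hu5, map_zero] at hφ
    rw [← hφ, map_zero] at hu6
    exact one_ne_zero hu6.symm
end

section
/- For the matrix A₄ = [[1,0,1],[0,1,1],[1,1,1]], the quotient ℤ³/(I-A₄)ℤ³ is isomorphic to ℤ, and ℤ³/(I-Â₄)ℤ³ is isomorphic to ℤ ⊕ ℤ; moreover det(I - A₄) = 0. -/
open Matrix

private def f19 : (Fin 3 → ℤ) →ₗ[ℤ] ℤ where
  toFun v := v 0 - v 1
  map_add' x y := by simp; ring
  map_smul' c x := by simp; ring

private def g19 : (Fin 3 → ℤ) →ₗ[ℤ] ℤ × ℤ where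
  toFun v := (v 0 - v 1, v 1 + v 2)
  map_add' x y := by simp [Prod.ext_iff]; constructor <;> ring
  map_smul' c x := by simp [Prod.ext_iff]; constructor <;> ring

/-- For A₄ = [[1,0,1],[0,1,1],[1,1,1]]: ℤ³/(I-A₄)ℤ³ ≅ ℤ, ℤ³/(I-Â₄)ℤ³ ≅ ℤ ⊕ ℤ,
and det(I - A₄) = 0. -/
theorem stmt19 :
    let A : Matrix (Fin 3) (Fin 3) ℤ := !![1, 0, 1; 0, 1, 1; 1, 1, 1]
    let R : Matrix (Fin 3) (Fin 3) ℤ := !![1, 1, 1; 0, 0, 0; 0, 0, 0]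
    let Ahat := A + R - A * R
    Nonempty (((Fin 3 → ℤ) ⧸ LinearMap.range (1 - A).mulVecLin) ≃+ ℤ) ∧
    Nonempty (((Fin 3 → ℤ) ⧸ LinearMap.range (1 - Ahat).mulVecLin) ≃+ ℤ × ℤ) ∧
    (1 - A).det = 0 := by
  intro A R Ahat
  have hA : (1 - A) = !![0,0,-1;0,0,-1;-1,-1,0] := by
    ext i j
    fin_cases i <;> fin_cases j <;>
      simp [A, Matrix.one_apply, Matrix.vecHead, Matrix.vecTail]
  have hAhat : (1 - Ahat) = !![0,0,-1;0,0,-1;0,0,1] := by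
    show (1 - (A + R - A * R)) = _
    ext i j
    fin_cases i <;> fin_cases j <;>
      simp [A, R, Matrix.mul_apply, Fin.sum_univ_three, Matrix.one_apply,
        Matrix.vecHead, Matrix.vecTail]
  refine ⟨?_, ?_, by rw [hA]; decide⟩
  · rw [hA]
    set p := LinearMap.range (!![0,0,-1;0,0,-1;-1,-1,0] : Matrix (Fin 3) (Fin 3) ℤ).mulVecLin
      with hp
    have h1 : p ≤ LinearMap.ker f19 := by
      rintro v ⟨x, rfl⟩
      show _ - _ = (0 : ℤ)
      simp [Matrix.mulVecLin, Matrix.mulVec, dotProduct, Fin.sum_univ_three]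
    have h2 : LinearMap.ker f19 ≤ p := by
      intro v hv
      have hv' : v 0 - v 1 = 0 := hv
      refine ⟨![-(v 2), 0, -(v 0)], ?_⟩
      ext i
      fin_cases i <;>
        simp [Matrix.mulVecLin, Matrix.mulVec, dotProduct, Fin.sum_univ_three] <;>
        linarith
    have hsurj : Function.Surjective (p.liftQ f19 h1) := by
      intro a
      refine ⟨Submodule.Quotient.mk ![a, 0, 0], ?_⟩
      show (![a, 0, 0] : Fin 3 → ℤ) 0 - _ = a
      simp
    have hinj : Function.Injective (p.liftQ f19 h1) := by
      rw [← LinearMap.ker_eq_bot, Submodule.ker_liftQ_eq_bot]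
      exact h2
    exact ⟨(LinearEquiv.ofBijective (p.liftQ f19 h1) ⟨hinj, hsurj⟩).toAddEquiv⟩
  · rw [hAhat]
    set p := LinearMap.range (!![0,0,-1;0,0,-1;0,0,1] : Matrix (Fin 3) (Fin 3) ℤ).mulVecLin
      with hp
    have h1 : p ≤ LinearMap.ker g19 := by
      rintro v ⟨x, rfl⟩
      show (_ - _, _ + _) = ((0 : ℤ), (0 : ℤ))
      simp [Matrix.mulVecLin, Matrix.mulVec, dotProduct, Fin.sum_univ_three]
    have h2 : LinearMap.ker g19 ≤ p := by
      intro v hv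
      have hv' : (v 0 - v 1, v 1 + v 2) = ((0 : ℤ), (0 : ℤ)) := hv
      rw [Prod.ext_iff] at hv'
      obtain ⟨h3, h4⟩ := hv'
      simp only [] at h3 h4
      refine ⟨![0, 0, -(v 1)], ?_⟩
      ext i
      fin_cases i <;>
        simp [Matrix.mulVecLin, Matrix.mulVec, dotProduct, Fin.sum_univ_three] <;>
        linarith
    have hsurj : Function.Surjective (p.liftQ g19 h1) := by
      rintro ⟨a, b⟩
      refine ⟨Submodule.Quotient.mk ![a, 0, b], ?_⟩
      show (_ - _, _ + _) = (a, b)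
      simp
    have hinj : Function.Injective (p.liftQ g19 h1) := by
      rw [← LinearMap.ker_eq_bot, Submodule.ker_liftQ_eq_bot]
      exact h2
    exact ⟨(LinearEquiv.ofBijective (p.liftQ g19 h1) ⟨hinj, hsurj⟩).toAddEquiv⟩
end
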